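/- Let n be even and F a CNF formula over n variables with m clauses. Let A_F be the set of all vectors A_F x : Fin m → Bool, over partial assignments x to the first n/2 variables, where (A_F x) j = true iff no literal of clause j on one of the first n/2 variables is satisfied by x; let B_F be the analogous set of vectors B_F y over partial assignments y to the last n/2 variables. Then F is unsatisfiable if and only if there exists a monotone Boolean function f : (Fin m → Bool) → Bool with f a = true for every a ∈ A_F and f (complement of b) = false for every b ∈ B_F. -/

import Mathlib

/-- Lemma 4.1 of the paper, with the sets `A_F`, `B_F` of the Williams SAT-to-OV
reduction made explicit: `F` is unsatisfiable iff there is a monotone Boolean function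
`f` with `f a = true` for every `a ∈ A_F` and `f (complement of b) = false` for every
`b ∈ B_F`. -/
theorem stmt_3 (n m : ℕ) (hn : n % 2 = 0) (F : Fin m → Finset (Fin n × Bool)) :
    (¬ ∃ σ : Fin n → Bool, ∀ j : Fin m, ∃ l ∈ F j, σ l.1 = l.2) ↔
    (∃ f : (Fin m → Bool) → Bool, Monotone f ∧
      (∀ x : Fin (n / 2) → Bool,
        f (fun j => !decide (∃ (v : Fin (n / 2)) (p : Bool),
            (Fin.castLE (Nat.div_le_self n 2) v, p) ∈ F j ∧ x v = p)) = true) ∧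
      (∀ y : Fin (n / 2) → Bool,
        f (fun j => !(!decide (∃ (v : Fin (n / 2)) (p : Bool),
            ((⟨n / 2 + v.1, by have := v.isLt; omega⟩ : Fin n), p) ∈ F j ∧ y v = p))) = false)) := by
  constructor
  · intro hunsat
    refine ⟨fun u => decide (∃ x : Fin (n/2) → Bool, ∀ j : Fin m,
        (!decide (∃ (v : Fin (n/2)) (p : Bool),
          (Fin.castLE (Nat.div_le_self n 2) v, p) ∈ F j ∧ x v = p)) = true → u j = true),
        ?_, ?_, ?_⟩
    · intro u v huv
      refine Bool.le_iff_imp.mpr ?_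
      simp only [decide_eq_true_eq]
      rintro ⟨x, hx⟩
      exact ⟨x, fun j hj => Bool.le_iff_imp.mp (huv j) (hx j hj)⟩
    · intro x
      simp only [decide_eq_true_eq]
      exact ⟨x, fun j h => h⟩
    · intro y
      simp only [decide_eq_false_iff_not]
      rintro ⟨x, hx⟩
      push_neg at hunsat
      set σ : Fin n → Bool := fun v =>
        if h : v.1 < n / 2 then x ⟨v.1, h⟩ else y ⟨v.1 - n / 2, by have := v.isLt; omega⟩ with hσ
      obtain ⟨j, hj⟩ := hunsat σ
      have hAj : (!decide (∃ (v : Fin (n/2)) (p : Bool),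
          (Fin.castLE (Nat.div_le_self n 2) v, p) ∈ F j ∧ x v = p)) = true := by
        simp only [Bool.not_eq_true', decide_eq_false_iff_not]
        rintro ⟨v, p, hmem, hxv⟩
        refine hj _ hmem ?_
        simp only [hσ]
        have hlt : (Fin.castLE (Nat.div_le_self n 2) v).1 < n / 2 := v.isLt
        rw [dif_pos hlt]
        convert hxv using 2
        exact Fin.ext rfl
      have := hx j hAj
      simp only [Bool.not_not, decide_eq_true_eq] at this
      obtain ⟨v, p, hmem, hyv⟩ := this
      refine hj _ hmem ?_
      simp only [hσ]
      rw [dif_neg (by omega)]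
      have hv : n / 2 + v.1 - n / 2 = v.1 := by omega
      simp only [hv, Fin.eta]
      exact hyv
  · rintro ⟨f, hmono, hA, hB⟩ ⟨σ, hσ⟩
    set x : Fin (n/2) → Bool := fun v => σ (Fin.castLE (Nat.div_le_self n 2) v)
    set y : Fin (n/2) → Bool := fun v => σ ⟨n/2 + v.1, by have := v.isLt; omega⟩
    have hle : (fun j => !decide (∃ (v : Fin (n / 2)) (p : Bool),
            (Fin.castLE (Nat.div_le_self n 2) v, p) ∈ F j ∧ x v = p)) ≤
        (fun j => !(!decide (∃ (v : Fin (n / 2)) (p : Bool),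
            ((⟨n / 2 + v.1, by have := v.isLt; omega⟩ : Fin n), p) ∈ F j ∧ y v = p))) := by
      intro j
      refine Bool.le_iff_imp.mpr ?_
      simp only [Bool.not_eq_true', Bool.not_not, decide_eq_false_iff_not, decide_eq_true_eq]
      intro hnoA
      obtain ⟨⟨w, p⟩, hmem, hwp⟩ := hσ j
      by_cases hw : w.1 < n / 2
      · exfalso
        refine hnoA ⟨⟨w.1, hw⟩, p, ?_, hwp⟩
        convert hmem using 3
        exact Fin.ext rfl
      · refine ⟨⟨w.1 - n/2, by have := w.isLt; omega⟩, p, ?_, ?_⟩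
        · convert hmem using 3
          show n / 2 + (w.1 - n / 2) = w.1; omega
        · show σ ⟨n/2 + (w.1 - n/2), _⟩ = p
          rw [show (⟨n/2 + (w.1 - n/2), _⟩ : Fin n) = w from Fin.ext (by simp; omega)]
          exact hwp
    have h1 := hA x
    have h2 := hB y
    have := hmono hle
    rw [h1, h2] at this
    exact absurd this (by simp)
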